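/- For every complex d × d matrix Ψ, the minimum over pairs of unitary d × d matrices (U, V) of the entrywise ℓ₁ norm of UΨV is attained and equals the trace norm of Ψ: min_{U,V unitary} Σ_{i,j} |(UΨV)_{i,j}| = ‖Ψ‖₁. (This expresses that the negativity of quantumness of a bipartite pure state equals its negativity, since the coefficient matrix transforms as Ψ ↦ UΨV under local changes of basis and ‖Ψ‖₁ = Σ_k √λ_k in terms of the Schmidt coefficients.) -/

import Mathlib

/-!
Let `v` be an orthonormal eigenbasis of `Ψ†Ψ` with eigenvalues `λ`. The vectors `Ψ v_k` are
orthogonal with `‖Ψ v_k‖² = λ_k`, so normalising the nonzero ones and extending to an orthonormal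
basis gives a unitary `U` with `U† Ψ V = D := diag(√λ)`. The entrywise `ℓ₁` norm of `D` is
`Tr D = ‖Ψ‖₁`. Conversely every `X = U₁ Ψ V₁` has the form `W₁ D W₂` with `W₁, W₂` unitary, so
`Tr D = Tr (M X)` for the unitary `M = W₂† W₁†`; as the entries of `M` have modulus at most one,
`|Tr (M X)| ≤ Σ |X_ij|`.
-/

open Matrix BigOperators
open scoped ComplexOrder

noncomputable section

/-- Trace norm `‖X‖₁ = Tr √(X†X)` of a square complex matrix (the sum of the
singular values of `X`). -/
def traceNorm {m : Type*} [Fintype m] [DecidableEq m] (X : Matrix m m ℂ) : ℝ :=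
  (((Matrix.posSemidef_conjTranspose_mul_self X).1.eigenvectorUnitary : Matrix m m ℂ) *
    diagonal (((↑) : ℝ → ℂ) ∘ Real.sqrt ∘ (Matrix.posSemidef_conjTranspose_mul_self X).1.eigenvalues) *
    (star (Matrix.posSemidef_conjTranspose_mul_self X).1.eigenvectorUnitary : Matrix m m ℂ)).trace.re

theorem traceNorm_eq_sum_sqrt_eigenvalues {m : Type*} [Fintype m] [DecidableEq m]
    (X : Matrix m m ℂ) :
    traceNorm X = ∑ k, √((posSemidef_conjTranspose_mul_self X).1.eigenvalues k) := by
  rw [traceNorm, trace_mul_cycle, Unitary.coe_star_mul_self, one_mul, trace_diagonal,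
    Complex.re_sum]
  rfl

namespace Matrix

section SingularValueDecomposition

variable {m n : Type*} [Fintype m] [DecidableEq m] [Fintype n]

theorem star_mulVec_eigenvectorBasis_dotProduct {A : Matrix n m ℂ} (hH : (Aᴴ * A).IsHermitian)
    (j k : m) :
    star (A *ᵥ ⇑(hH.eigenvectorBasis j)) ⬝ᵥ (A *ᵥ ⇑(hH.eigenvectorBasis k)) =
      if j = k then (hH.eigenvalues k : ℂ) else 0 := by
  have hv : star ⇑(hH.eigenvectorBasis j) ⬝ᵥ ⇑(hH.eigenvectorBasis k) =
      if j = k then 1 else 0 := by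
    rw [dotProduct_comm, ← EuclideanSpace.inner_eq_star_dotProduct]
    exact orthonormal_iff_ite.mp hH.eigenvectorBasis.orthonormal j k
  rw [star_mulVec, ← dotProduct_mulVec, mulVec_mulVec, hH.mulVec_eigenvectorBasis,
    dotProduct_smul, hv]
  split_ifs <;> simp [Complex.real_smul]

theorem mulVec_eigenvectorBasis_eq_zero {A : Matrix n m ℂ} (hH : (Aᴴ * A).IsHermitian) {k : m}
    (hk : hH.eigenvalues k ≤ 0) : A *ᵥ ⇑(hH.eigenvectorBasis k) = 0 := by
  have hnorm := star_mulVec_eigenvectorBasis_dotProduct hH k k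
  rw [if_pos rfl] at hnorm
  refine dotProduct_star_self_eq_zero.mp (le_antisymm ?_ (dotProduct_star_self_nonneg _))
  rw [hnorm]
  exact_mod_cast hk

theorem orthonormal_inv_sqrt_smul_mulVec_eigenvectorBasis {A : Matrix n m ℂ}
    (hH : (Aᴴ * A).IsHermitian) :
    Orthonormal ℂ ({k | 0 < hH.eigenvalues k}.domRestrict fun k =>
      (√(hH.eigenvalues k) : ℂ)⁻¹ • WithLp.toLp 2 (A *ᵥ ⇑(hH.eigenvectorBasis k))) := by
  classical
  rw [orthonormal_iff_ite]
  rintro ⟨j, hj⟩ ⟨k, hk⟩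
  simp only [Set.domRestrict_apply, inner_smul_left, inner_smul_right,
    EuclideanSpace.inner_toLp_toLp]
  rw [dotProduct_comm, star_mulVec_eigenvectorBasis_dotProduct]
  by_cases hjk : j = k
  · subst hjk
    have hs : (√(hH.eigenvalues j) : ℂ) ≠ 0 := by exact_mod_cast (Real.sqrt_pos.mpr hj).ne'
    rw [if_pos rfl, if_pos rfl, ← Complex.ofReal_inv, Complex.conj_ofReal, Complex.ofReal_inv]
    field_simp
    exact_mod_cast (Real.sq_sqrt hj.le).symm
  · rw [if_neg hjk, if_neg (by simpa using hjk), mul_zero, mul_zero]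

theorem exists_mem_unitaryGroup_mul_eigenvectorUnitary_eq {A : Matrix m m ℂ}
    (hH : (Aᴴ * A).IsHermitian) :
    ∃ U ∈ unitaryGroup m ℂ,
      A * hH.eigenvectorUnitary = U * diagonal fun k => (√(hH.eigenvalues k) : ℂ) := by
  obtain ⟨b, hb⟩ := (orthonormal_inv_sqrt_smul_mulVec_eigenvectorBasis hH
    ).exists_orthonormalBasis_extension_of_card_eq (by simp)
  refine ⟨(EuclideanSpace.basisFun m ℂ).toBasis.toMatrix b.toBasis,
    (EuclideanSpace.basisFun m ℂ).toMatrix_orthonormalBasis_mem_unitary b, ?_⟩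
  ext i k
  have hcol : (A * hH.eigenvectorUnitary) i k = (A *ᵥ ⇑(hH.eigenvectorBasis k)) i := rfl
  rw [hcol, mul_diagonal]
  by_cases hk : 0 < hH.eigenvalues k
  · have hs : (√(hH.eigenvalues k) : ℂ) ≠ 0 := by exact_mod_cast (Real.sqrt_pos.mpr hk).ne'
    have hbk : b k i = (√(hH.eigenvalues k) : ℂ)⁻¹ * (A *ᵥ ⇑(hH.eigenvectorBasis k)) i := by
      simp [hb k hk]
    change _ = b k i * _
    rw [hbk]
    field_simp
  · rw [mulVec_eigenvectorBasis_eq_zero hH (not_lt.mp hk), Real.sqrt_eq_zero'.mpr (not_lt.mp hk)]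
    simp

end SingularValueDecomposition

section UnitaryOrbit

variable {𝕜 m : Type*} [RCLike 𝕜] [Fintype m] [DecidableEq m]

theorem norm_trace_mul_le_sum_norm {M : Matrix m m 𝕜} (hM : M ∈ unitaryGroup m 𝕜)
    (X : Matrix m m 𝕜) : ‖(M * X).trace‖ ≤ ∑ i, ∑ j, ‖X i j‖ := by
  rw [Finset.sum_comm]
  refine (norm_sum_le _ _).trans (Finset.sum_le_sum fun i _ => ?_)
  refine (norm_sum_le _ _).trans (Finset.sum_le_sum fun j _ => ?_)
  rw [norm_mul]
  exact mul_le_of_le_one_left (norm_nonneg _) (entry_norm_bound_of_unitary hM i j)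

theorem norm_trace_le_sum_norm_mul_mul {W₁ W₂ : Matrix m m 𝕜} (hW₁ : W₁ ∈ unitaryGroup m 𝕜)
    (hW₂ : W₂ ∈ unitaryGroup m 𝕜) (B : Matrix m m 𝕜) :
    ‖B.trace‖ ≤ ∑ i, ∑ j, ‖(W₁ * B * W₂) i j‖ := by
  have hM : star W₂ * star W₁ ∈ unitaryGroup m 𝕜 :=
    mul_mem (Unitary.star_mem hW₂) (Unitary.star_mem hW₁)
  have htr : (star W₂ * star W₁ * (W₁ * B * W₂)).trace = B.trace := by
    rw [show star W₂ * star W₁ * (W₁ * B * W₂) = star W₂ * (star W₁ * W₁) * B * W₂ by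
      simp only [mul_assoc], (mem_unitaryGroup_iff').mp hW₁, mul_one, trace_mul_cycle,
      (mem_unitaryGroup_iff).mp hW₂, one_mul]
  exact htr ▸ norm_trace_mul_le_sum_norm hM _

theorem sum_sum_norm_diagonal {E : Type*} [SeminormedAddCommGroup E] (g : m → E) :
    ∑ i, ∑ j, ‖diagonal g i j‖ = ∑ i, ‖g i‖ := by
  refine Finset.sum_congr rfl fun i _ => ?_
  rw [Fintype.sum_eq_single i fun j hj => by rw [diagonal_apply_ne _ (Ne.symm hj), norm_zero],
    diagonal_apply_eq]

end UnitaryOrbit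

end Matrix

/-- The minimum over pairs of unitaries `(U, V)` of the entrywise `ℓ₁` norm of `U Ψ V`
is attained and equals the trace norm of `Ψ`. -/
theorem isLeast_entrywise_l1_unitary_orbit {d : ℕ} (Ψ : Matrix (Fin d) (Fin d) ℂ) :
    IsLeast
      {x : ℝ | ∃ U ∈ Matrix.unitaryGroup (Fin d) ℂ, ∃ V ∈ Matrix.unitaryGroup (Fin d) ℂ,
        x = ∑ i, ∑ j, ‖(U * Ψ * V) i j‖}
      (traceNorm Ψ) := by
  set hH := (posSemidef_conjTranspose_mul_self Ψ).1
  obtain ⟨U, hU, hΨV⟩ := exists_mem_unitaryGroup_mul_eigenvectorUnitary_eq hH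
  set V : Matrix (Fin d) (Fin d) ℂ := ↑hH.eigenvectorUnitary
  have hV : V ∈ unitaryGroup (Fin d) ℂ := hH.eigenvectorUnitary.2
  set D : Matrix (Fin d) (Fin d) ℂ := diagonal fun k => (√(hH.eigenvalues k) : ℂ)
  have hD : star U * Ψ * V = D := by
    rw [mul_assoc, hΨV, ← mul_assoc, (mem_unitaryGroup_iff').mp hU, one_mul]
  have hΨ : Ψ = U * D * star V := by
    rw [← hD, show U * (star U * Ψ * V) * star V = U * star U * Ψ * (V * star V) by
      simp only [mul_assoc], (mem_unitaryGroup_iff).mp hU, (mem_unitaryGroup_iff).mp hV, one_mul,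
      mul_one]
  have hnorm : traceNorm Ψ = ‖D.trace‖ := by
    rw [traceNorm_eq_sum_sqrt_eigenvalues, trace_diagonal, ← Complex.ofReal_sum,
      Complex.norm_of_nonneg (Finset.sum_nonneg fun k _ => Real.sqrt_nonneg _)]
  refine ⟨⟨star U, Unitary.star_mem hU, V, hV, ?_⟩, ?_⟩
  · rw [hD, sum_sum_norm_diagonal, traceNorm_eq_sum_sqrt_eigenvalues]
    simp only [Complex.norm_real, Real.norm_eq_abs, abs_of_nonneg (Real.sqrt_nonneg _)]
  · rintro x ⟨U₁, hU₁, V₁, hV₁, rfl⟩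
    rw [hnorm, hΨ, show U₁ * (U * D * star V) * V₁ = U₁ * U * D * (star V * V₁) by
      simp only [mul_assoc]]
    exact norm_trace_le_sum_norm_mul_mul (mul_mem hU₁ hU) (mul_mem (Unitary.star_mem hV) hV₁) D
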